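/- arXiv:1602.04126 — 2 statements merged into one kernel-verified Lean document; each statement's English description precedes it below -/
import Mathlib

section
/- If (C,P) is a higher-order Σ-doctrine with full co-comprehension which is also a restricted Σ(C_P^o)-doctrine, then the opposite doctrine (C,P^o), given by P^o(A) = P(A)^op, is a tripos with full comprehension. -/
open CategoryTheory CategoryTheory.Limits

universe w v u

/-- A doctrine: a contravariant functor from a category with finite products
to partially ordered sets, presented via a family of fibers `P` and monotone
reindexing maps. -/
structure Doctrine (C : Type u) [Category.{v} C] (P : C → Type w)
    [∀ A, PartialOrder (P A)] where
  map : ∀ {X A : C}, (X ⟶ A) → P A → P X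
  map_mono : ∀ {X A : C} (f : X ⟶ A) ⦃α β : P A⦄, α ≤ β → map f α ≤ map f β
  map_id : ∀ {A : C} (α : P A), map (𝟙 A) α = α
  map_comp : ∀ {X Y A : C} (f : X ⟶ Y) (g : Y ⟶ A) (α : P A),
    map (f ≫ g) α = map f (map g α)

variable {C : Type u} [Category.{v} C] {P : C → Type w}

/-- The opposite doctrine `P^o`, with fibers the opposite posets. -/
def Doctrine.op [∀ A, PartialOrder (P A)] (D : Doctrine C P) :
    Doctrine C (fun A => (P A)ᵒᵈ) where
  map f α := OrderDual.toDual (D.map f (OrderDual.ofDual α))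
  map_mono f _ _ h := D.map_mono f h
  map_id := D.map_id
  map_comp := D.map_comp

/-- Comprehension structure on a doctrine with fiberwise top elements. -/
structure Comprehension [∀ A, PartialOrder (P A)] [∀ A, OrderTop (P A)]
    (D : Doctrine C P) where
  cObj : ∀ {A : C}, P A → C
  cArr : ∀ {A : C} (α : P A), cObj α ⟶ A
  map_cArr : ∀ {A : C} (α : P A), D.map (cArr α) α = ⊤
  univ : ∀ {A Y : C} (α : P A) (f : Y ⟶ A), D.map f α = ⊤ →
    ∃! k : Y ⟶ cObj α, k ≫ cArr α = f

/-- Fullness of comprehension: the functor `α ↦ ⌊α⌋` into subobjects is full. -/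
def Comprehension.IsFull [∀ A, PartialOrder (P A)] [∀ A, OrderTop (P A)]
    {D : Doctrine C P} (cmp : Comprehension D) : Prop :=
  ∀ (A : C) (α β : P A) (g : cmp.cObj α ⟶ cmp.cObj β),
    g ≫ cmp.cArr β = cmp.cArr α → α ≤ β

/-- Co-comprehension structure on a doctrine with fiberwise bottom elements. -/
structure CoComprehension [∀ A, PartialOrder (P A)] [∀ A, OrderBot (P A)]
    (D : Doctrine C P) where
  oObj : ∀ {A : C}, P A → C
  oArr : ∀ {A : C} (α : P A), oObj α ⟶ A
  map_oArr : ∀ {A : C} (α : P A), D.map (oArr α) α = ⊥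
  univ : ∀ {A Y : C} (α : P A) (f : Y ⟶ A), D.map f α = ⊥ →
    ∃! k : Y ⟶ oObj α, k ≫ oArr α = f

/-- Fullness of co-comprehension: the contravariant functor `α ↦ ⌈α⌉` into
subobjects is full. -/
def CoComprehension.IsFull [∀ A, PartialOrder (P A)] [∀ A, OrderBot (P A)]
    {D : Doctrine C P} (co : CoComprehension D) : Prop :=
  ∀ (A : C) (α β : P A) (g : co.oObj β ⟶ co.oObj α),
    g ≫ co.oArr α = co.oArr β → α ≤ β

/-- A stable initial object: an initial object `Z` with `X × Z ≅ Z` for all `X`. -/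
def StableInitial [HasFiniteProducts C] (Z : C) : Prop :=
  Nonempty (IsInitial Z) ∧ ∀ X : C, Nonempty ((X ⨯ Z) ≅ Z)

/-- The axiom of choice for a doctrine: along every projection `π_Γ : Γ × A → Γ`
with `A` not a stable initial object, reindexing has a left adjoint, and every
`ψ ∈ P(Γ × A)` has a choice arrow `ε_ψ : Γ ⟶ A` with `Σ_{π_Γ}ψ = ⟨id, ε_ψ⟩*ψ`. -/
structure AxChoice [HasFiniteProducts C] [∀ A, PartialOrder (P A)]
    (D : Doctrine C P) where
  Sig : ∀ (Γ A : C), ¬ StableInitial A → P (Γ ⨯ A) → P Γ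
  adj : ∀ {Γ A : C} (h : ¬ StableInitial A) (ψ : P (Γ ⨯ A)) (β : P Γ),
    Sig Γ A h ψ ≤ β ↔ ψ ≤ D.map prod.fst β
  eps : ∀ {Γ A : C}, ¬ StableInitial A → P (Γ ⨯ A) → (Γ ⟶ A)
  eps_spec : ∀ {Γ A : C} (h : ¬ StableInitial A) (ψ : P (Γ ⨯ A)),
    Sig Γ A h ψ = D.map (prod.lift (𝟙 Γ) (eps h ψ)) ψ

/-- Elementary structure: equality predicates `δ_A` such that
`ψ ↦ π₁*ψ ⊓ π₂₃*δ_A` is left adjoint to reindexing along `id_X × Δ_A`. -/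
structure Elementary [HasFiniteProducts C] [∀ A, SemilatticeInf (P A)]
    (D : Doctrine C P) where
  eq : ∀ A : C, P (A ⨯ A)
  eq_adj : ∀ (X A : C) (ψ : P (X ⨯ A)) (φ : P ((X ⨯ A) ⨯ A)),
    (D.map prod.fst ψ ⊓ D.map (prod.map prod.snd (𝟙 A)) (eq A)) ≤ φ ↔
      ψ ≤ D.map (prod.lift (𝟙 (X ⨯ A)) prod.snd) φ

/-- An eaco: an elementary doctrine with full co-comprehension satisfying AC,
together with the compatibility of choice arrows for graphs of co-comprehension
arrows with reindexing. -/
structure Eaco [HasFiniteProducts C] [∀ A, SemilatticeInf (P A)]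
    [∀ A, OrderBot (P A)] (D : Doctrine C P) where
  elem : Elementary D
  cocmp : CoComprehension D
  full : cocmp.IsFull
  ac : AxChoice D
  compat : ∀ {X A : C} (f : X ⟶ A) (α : P A)
      (h1 : ¬ StableInitial (cocmp.oObj α))
      (h2 : ¬ StableInitial (cocmp.oObj (D.map f α))),
      D.map f (D.map (prod.lift (𝟙 A)
          (ac.eps h1 (D.map (prod.map (𝟙 A) (cocmp.oArr α)) (elem.eq A))))
        (D.map (prod.map (𝟙 A) (cocmp.oArr α)) (elem.eq A)))
      = D.map (prod.lift (𝟙 X)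
          (ac.eps h2 (D.map (prod.map (𝟙 X) (cocmp.oArr (D.map f α))) (elem.eq X))))
        (D.map (prod.map (𝟙 X) (cocmp.oArr (D.map f α))) (elem.eq X))

/-- Weak power objects: the doctrine is higher order. -/
structure HigherOrder [HasFiniteProducts C] [∀ A, PartialOrder (P A)]
    (D : Doctrine C P) where
  pow : C → C
  mem : ∀ A : C, P (A ⨯ pow A)
  classify : ∀ (A Y : C) (φ : P (A ⨯ Y)),
    ∃ χ : Y ⟶ pow A, D.map (prod.map (𝟙 A) χ) (mem A) = φ

/-- A heaco: a higher order eaco. -/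
structure Heaco [HasFiniteProducts C] [∀ A, SemilatticeInf (P A)]
    [∀ A, OrderBot (P A)] (D : Doctrine C P) where
  eaco : Eaco D
  ho : HigherOrder D

/-- Implicational structure relative to right adjoints `Pi` along projections. -/
structure Implicational [HasFiniteProducts C] [∀ A, PartialOrder (P A)]
    (D : Doctrine C P) (Pi : ∀ (Γ A : C), P (Γ ⨯ A) → P Γ) where
  imp : ∀ {A : C}, P A → P A → P A
  map_imp : ∀ {X A : C} (f : X ⟶ A) (α β : P A),
    D.map f (imp α β) = imp (D.map f α) (D.map f β)
  pi_imp : ∀ {Γ A : C} (α : P Γ) (β : P (Γ ⨯ A)),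
    Pi Γ A (imp (D.map prod.fst α) β) = imp α (Pi Γ A β)
  ax_a : ∀ {A : C} (φ ψ : P A), φ ≤ imp ψ φ
  ax_b : ∀ {A : C} (γ φ ψ : P A), imp γ (imp φ ψ) ≤ imp (imp γ φ) (imp γ ψ)
  ax_c : ∀ {A : C} (γ φ ψ : P A), γ ≤ imp φ ψ → γ ≤ φ → γ ≤ ψ
  ax_d : ∀ {A : C} (γ φ ψ : P A), φ ≤ ψ → γ ≤ imp φ ψ

/-- A tripos: a Heyting-algebra valued doctrine with `Σ` and `Π` along
projections satisfying Beck–Chevalley, equality predicates, and weak power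
objects. -/
structure Tripos [HasFiniteProducts C] [∀ A, PartialOrder (P A)]
    (D : Doctrine C P) where
  inf : ∀ {A : C}, P A → P A → P A
  sup : ∀ {A : C}, P A → P A → P A
  himp : ∀ {A : C}, P A → P A → P A
  top : ∀ A : C, P A
  bot : ∀ A : C, P A
  inf_le_left : ∀ {A : C} (α β : P A), inf α β ≤ α
  inf_le_right : ∀ {A : C} (α β : P A), inf α β ≤ β
  le_inf : ∀ {A : C} (γ α β : P A), γ ≤ α → γ ≤ β → γ ≤ inf α β
  le_sup_left : ∀ {A : C} (α β : P A), α ≤ sup α β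
  le_sup_right : ∀ {A : C} (α β : P A), β ≤ sup α β
  sup_le : ∀ {A : C} (α β γ : P A), α ≤ γ → β ≤ γ → sup α β ≤ γ
  le_top : ∀ {A : C} (α : P A), α ≤ top A
  bot_le : ∀ {A : C} (α : P A), bot A ≤ α
  himp_adj : ∀ {A : C} (γ α β : P A), γ ≤ himp α β ↔ inf γ α ≤ β
  map_inf : ∀ {X A : C} (f : X ⟶ A) (α β : P A),
    D.map f (inf α β) = inf (D.map f α) (D.map f β)
  map_sup : ∀ {X A : C} (f : X ⟶ A) (α β : P A),
    D.map f (sup α β) = sup (D.map f α) (D.map f β)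
  map_himp : ∀ {X A : C} (f : X ⟶ A) (α β : P A),
    D.map f (himp α β) = himp (D.map f α) (D.map f β)
  map_top : ∀ {X A : C} (f : X ⟶ A), D.map f (top A) = top X
  map_bot : ∀ {X A : C} (f : X ⟶ A), D.map f (bot A) = bot X
  Sig : ∀ (Γ A : C), P (Γ ⨯ A) → P Γ
  Sig_adj : ∀ {Γ A : C} (ψ : P (Γ ⨯ A)) (β : P Γ),
    Sig Γ A ψ ≤ β ↔ ψ ≤ D.map prod.fst β
  Sig_bc : ∀ {Γ Δ A : C} (f : Δ ⟶ Γ) (ψ : P (Γ ⨯ A)),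
    D.map f (Sig Γ A ψ) = Sig Δ A (D.map (prod.map f (𝟙 A)) ψ)
  Pi : ∀ (Γ A : C), P (Γ ⨯ A) → P Γ
  Pi_adj : ∀ {Γ A : C} (ψ : P (Γ ⨯ A)) (β : P Γ),
    β ≤ Pi Γ A ψ ↔ D.map prod.fst β ≤ ψ
  Pi_bc : ∀ {Γ Δ A : C} (f : Δ ⟶ Γ) (ψ : P (Γ ⨯ A)),
    D.map f (Pi Γ A ψ) = Pi Δ A (D.map (prod.map f (𝟙 A)) ψ)
  eq : ∀ X : C, P (X ⨯ X)
  eq_spec : ∀ {X : C} (α : P (X ⨯ X)),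
    top X ≤ D.map (prod.lift (𝟙 X) (𝟙 X)) α ↔ eq X ≤ α
  pow : C → C
  mem : ∀ A : C, P (A ⨯ pow A)
  classify : ∀ (A Y : C) (φ : P (A ⨯ Y)),
    ∃ χ : Y ⟶ pow A, D.map (prod.map (𝟙 A) χ) (mem A) = φ

/-!
Passing to `P^o` turns `Σ` along projections into `Π`, full co-comprehension into full
comprehension, and the restricted `Σ(C_P^o)` into a restricted `Π` along comprehension
arrows. The latter gives implication `α ⇒ β := Π_{⌊α⌋} ⌊α⌋*β`; by fullness, `α ≤ β` iff
`⌊α⌋*β = ⊤`, which yields modus ponens and the stability of `⇒` and `⊤` under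
reindexing. With `⇒`, `Π` and the weak power object `Ω = P(1)`, the remaining tripos
structure is given by the second-order (Russell–Prawitz) encodings of `∧`, `∨`, `⊥`, `∃`,
and by Leibniz equality.
-/

namespace Doctrine

variable [HasFiniteProducts C] [∀ A, PartialOrder (P A)] (E : Doctrine C P)

lemma map_prod_map_map_fst {X A B : C} (f : X ⟶ A) (α : P A) :
    E.map (prod.map f (𝟙 B)) (E.map prod.fst α) = E.map prod.fst (E.map f α) := by
  rw [← E.map_comp, ← E.map_comp, prod.map_fst]

lemma map_lift_map_fst {A B : C} (g : A ⟶ B) (α : P A) :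
    E.map (prod.lift (𝟙 A) g) (E.map prod.fst α) = α := by
  rw [← E.map_comp, prod.lift_fst, E.map_id]

end Doctrine

/-- The restricted `Π(C_P)`-structure on a doctrine with full comprehension. -/
structure RestrictedPiComprehension [∀ A, PartialOrder (P A)] [∀ A, OrderTop (P A)]
    (E : Doctrine C P) where
  cmp : Comprehension E
  full : cmp.IsFull
  PiC : ∀ {A : C} (α : P A), P (cmp.cObj α) → P A
  PiC_adj : ∀ {A : C} (α : P A) (γ : P (cmp.cObj α)) (β : P A),
    β ≤ PiC α γ ↔ E.map (cmp.cArr α) β ≤ γ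
  PiC_bc : ∀ {X A : C} (f : X ⟶ A) (α : P A)
    (q : cmp.cObj (E.map f α) ⟶ cmp.cObj α),
    q ≫ cmp.cArr α = cmp.cArr (E.map f α) ≫ f →
    ∀ ξ : P A,
      E.map f (PiC α (E.map (cmp.cArr α) ξ))
        = PiC (E.map f α) (E.map q (E.map (cmp.cArr α) ξ))

namespace RestrictedPiComprehension

variable [∀ A, PartialOrder (P A)] [∀ A, OrderTop (P A)] {E : Doctrine C P}
  (S : RestrictedPiComprehension E)

lemma le_iff_map_cArr_eq_top {A : C} {α β : P A} :
    α ≤ β ↔ E.map (S.cmp.cArr α) β = ⊤ := by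
  refine ⟨fun h => top_le_iff.mp ?_, fun h => ?_⟩
  · exact S.cmp.map_cArr α ▸ E.map_mono _ h
  · obtain ⟨k, hk, -⟩ := S.cmp.univ β (S.cmp.cArr α) h
    exact S.full A α β k hk

def imp {A : C} (α β : P A) : P A := S.PiC α (E.map (S.cmp.cArr α) β)

lemma le_imp_iff {A : C} {γ α β : P A} :
    γ ≤ S.imp α β ↔ E.map (S.cmp.cArr α) γ ≤ E.map (S.cmp.cArr α) β :=
  S.PiC_adj α _ γ

lemma le_imp {A : C} (α β : P A) : β ≤ S.imp α β :=
  S.le_imp_iff.mpr le_rfl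

lemma imp_eq_top_of_le {A : C} {α β : P A} (h : α ≤ β) : S.imp α β = ⊤ :=
  top_le_iff.mp (S.le_imp_iff.mpr ((S.le_iff_map_cArr_eq_top.mp h).symm ▸ le_top))

lemma imp_self {A : C} (α : P A) : S.imp α α = ⊤ :=
  S.imp_eq_top_of_le le_rfl

lemma map_imp {X A : C} (f : X ⟶ A) (α β : P A) :
    E.map f (S.imp α β) = S.imp (E.map f α) (E.map f β) := by
  have hf : E.map (S.cmp.cArr (E.map f α) ≫ f) α = ⊤ := by
    rw [E.map_comp]; exact S.cmp.map_cArr _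
  obtain ⟨q, hq, -⟩ := S.cmp.univ α _ hf
  rw [imp, S.PiC_bc f α q hq β, ← E.map_comp, hq, E.map_comp, imp]

lemma map_top (S : RestrictedPiComprehension E) {X A : C} (f : X ⟶ A) :
    E.map f (⊤ : P A) = ⊤ := by
  rw [← S.imp_self ⊤, S.map_imp, S.imp_self]

-- `⌊⊤⌋ → A` has a section, so reindexing along it reflects the order.
lemma top_imp {A : C} (β : P A) : S.imp ⊤ β = β := by
  obtain ⟨k, hk, -⟩ := S.cmp.univ (⊤ : P A) (𝟙 A) (E.map_id ⊤)
  refine le_antisymm ?_ (S.le_imp ⊤ β)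
  have h := E.map_mono k (S.le_imp_iff.mp (le_refl (S.imp ⊤ β)))
  rwa [← E.map_comp, ← E.map_comp, hk, E.map_id, E.map_id] at h

lemma le_of_le_imp {A : C} {γ α β : P A} (h : γ ≤ S.imp α β) (hα : γ ≤ α) :
    γ ≤ β := by
  rw [S.le_iff_map_cArr_eq_top] at h hα ⊢
  rwa [S.map_imp, hα, S.top_imp] at h

lemma imp_eq_top_iff {A : C} {α β : P A} : S.imp α β = ⊤ ↔ α ≤ β :=
  ⟨fun h => S.le_of_le_imp (h ▸ le_top) le_rfl, S.imp_eq_top_of_le⟩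

lemma imp_mono_right {A : C} (α : P A) {β β' : P A} (h : β ≤ β') :
    S.imp α β ≤ S.imp α β' :=
  S.le_imp_iff.mpr ((S.le_imp_iff.mp le_rfl).trans (E.map_mono _ h))

lemma le_imp_comm {A : C} {γ α β : P A} (h : γ ≤ S.imp α β) : α ≤ S.imp γ β := by
  rw [S.le_iff_map_cArr_eq_top, S.map_imp, imp_eq_top_iff] at h
  exact S.le_imp_iff.mpr h

end RestrictedPiComprehension

structure HigherOrderPiDoctrine [HasFiniteProducts C] [∀ A, PartialOrder (P A)]
    [∀ A, OrderTop (P A)] (E : Doctrine C P) extends RestrictedPiComprehension E where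
  Pi : ∀ (Γ A : C), P (Γ ⨯ A) → P Γ
  Pi_adj : ∀ {Γ A : C} (ψ : P (Γ ⨯ A)) (β : P Γ),
    β ≤ Pi Γ A ψ ↔ E.map prod.fst β ≤ ψ
  Pi_bc : ∀ {Γ Δ A : C} (f : Δ ⟶ Γ) (ψ : P (Γ ⨯ A)),
    E.map f (Pi Γ A ψ) = Pi Δ A (E.map (prod.map f (𝟙 A)) ψ)
  ho : HigherOrder E

namespace HigherOrderPiDoctrine

variable [HasFiniteProducts C] [∀ A, PartialOrder (P A)] [∀ A, OrderTop (P A)]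
  {E : Doctrine C P} (S : HigherOrderPiDoctrine E)

attribute [local simp] prod.lift_fst prod.lift_snd prod.lift_fst_assoc prod.lift_snd_assoc

lemma Pi_le_map_lift {Γ A : C} (ψ : P (Γ ⨯ A)) (g : Γ ⟶ A) :
    S.Pi Γ A ψ ≤ E.map (prod.lift (𝟙 Γ) g) ψ := by
  have h := E.map_mono (prod.lift (𝟙 Γ) g) ((S.Pi_adj ψ _).mp le_rfl)
  rwa [E.map_lift_map_fst] at h

lemma Pi_top (Γ A : C) : S.Pi Γ A ⊤ = ⊤ :=
  top_le_iff.mp ((S.Pi_adj _ _).mpr le_top)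

noncomputable abbrev Omega : C := S.ho.pow (⊤_ C)

-- The proposition variable `p` of the second-order encodings below.
noncomputable def generic (X : C) : P (X ⨯ S.Omega) :=
  E.map (prod.map (terminal.from X) (𝟙 S.Omega)) (S.ho.mem (⊤_ C))

lemma map_generic {X Y : C} (f : X ⟶ Y) :
    E.map (prod.map f (𝟙 S.Omega)) (S.generic Y) = S.generic X := by
  rw [generic, generic, ← E.map_comp]
  congr 1
  apply prod.hom_ext <;> simp

lemma exists_map_lift_generic_eq {A : C} (α : P A) :
    ∃ g : A ⟶ S.Omega, E.map (prod.lift (𝟙 A) g) (S.generic A) = α := by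
  obtain ⟨χ, hχ⟩ := S.ho.classify (⊤_ C) A (E.map prod.snd α)
  have h : prod.lift (𝟙 A) χ ≫ prod.map (terminal.from A) (𝟙 S.Omega)
      = prod.lift (terminal.from A) (𝟙 A) ≫ prod.map (𝟙 (⊤_ C)) χ := by
    apply prod.hom_ext <;> simp
  refine ⟨χ, ?_⟩
  rw [generic, ← E.map_comp, h, E.map_comp, hχ, ← E.map_comp, prod.lift_snd, E.map_id]

/-- `α ∧ β := ∀p. ((α ⇒ β ⇒ p) ⇒ p)`. -/
noncomputable def conj {A : C} (α β : P A) : P A :=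
  S.Pi A S.Omega (S.imp (S.imp (E.map prod.fst α)
    (S.imp (E.map prod.fst β) (S.generic A))) (S.generic A))

/-- `α ∨ β := ∀p. ((α ⇒ p) ⇒ (β ⇒ p) ⇒ p)`. -/
noncomputable def disj {A : C} (α β : P A) : P A :=
  S.Pi A S.Omega (S.imp (S.imp (E.map prod.fst α) (S.generic A))
    (S.imp (S.imp (E.map prod.fst β) (S.generic A)) (S.generic A)))

/-- `⊥ := ∀p. p`. -/
noncomputable def falsum (A : C) : P A := S.Pi A S.Omega (S.generic A)

/-- `∃a. ψ := ∀p. ((∀a. ψ ⇒ p) ⇒ p)`. -/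
noncomputable def exist (Γ A : C) (ψ : P (Γ ⨯ A)) : P Γ :=
  S.Pi Γ S.Omega (S.imp
    (S.Pi (Γ ⨯ S.Omega) A (S.imp (E.map (prod.map prod.fst (𝟙 A)) ψ)
      (E.map prod.fst (S.generic Γ))))
    (S.generic Γ))

/-- Leibniz equality `x = y := ∀U : P(X). (y ∈ U ⇒ x ∈ U)`. -/
noncomputable def leibniz (X : C) : P (X ⨯ X) :=
  S.Pi (X ⨯ X) (S.ho.pow X)
    (S.imp (E.map (prod.lift (prod.fst ≫ prod.snd) prod.snd) (S.ho.mem X))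
      (E.map (prod.lift (prod.fst ≫ prod.fst) prod.snd) (S.ho.mem X)))

lemma map_conj {X A : C} (f : X ⟶ A) (α β : P A) :
    E.map f (S.conj α β) = S.conj (E.map f α) (E.map f β) := by
  simp only [conj, S.Pi_bc, S.map_imp, S.map_generic, E.map_prod_map_map_fst]

lemma map_disj {X A : C} (f : X ⟶ A) (α β : P A) :
    E.map f (S.disj α β) = S.disj (E.map f α) (E.map f β) := by
  simp only [disj, S.Pi_bc, S.map_imp, S.map_generic, E.map_prod_map_map_fst]

lemma map_falsum {X A : C} (f : X ⟶ A) : E.map f (S.falsum A) = S.falsum X := by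
  rw [falsum, S.Pi_bc, S.map_generic, falsum]

lemma conj_le_left {A : C} (α β : P A) : S.conj α β ≤ α := by
  obtain ⟨g, hg⟩ := S.exists_map_lift_generic_eq α
  have h := S.Pi_le_map_lift (S.imp (S.imp (E.map prod.fst α)
    (S.imp (E.map prod.fst β) (S.generic A))) (S.generic A)) g
  simp only [S.map_imp, hg, E.map_lift_map_fst] at h
  rwa [S.imp_eq_top_of_le (S.le_imp β α), S.top_imp] at h

lemma conj_le_right {A : C} (α β : P A) : S.conj α β ≤ β := by
  obtain ⟨g, hg⟩ := S.exists_map_lift_generic_eq β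
  have h := S.Pi_le_map_lift (S.imp (S.imp (E.map prod.fst α)
    (S.imp (E.map prod.fst β) (S.generic A))) (S.generic A)) g
  simp only [S.map_imp, hg, E.map_lift_map_fst] at h
  rwa [S.imp_self, S.imp_eq_top_of_le le_top, S.top_imp] at h

-- Pulled back along its own comprehension arrow, `α ⇒ β ⇒ p` becomes true, and then
-- modus ponens applies twice.
lemma le_conj {A : C} {δ α β : P A} (hα : δ ≤ α) (hβ : δ ≤ β) :
    δ ≤ S.conj α β := by
  rw [conj, S.Pi_adj, S.le_imp_iff]
  set θ := S.imp (E.map prod.fst α) (S.imp (E.map prod.fst β) (S.generic A))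
  have hθ := S.cmp.map_cArr θ
  rw [S.map_imp, S.map_imp, S.imp_eq_top_iff] at hθ
  have weaken : ∀ {γ : P A}, δ ≤ γ →
      E.map (S.cmp.cArr θ) (E.map prod.fst δ) ≤ E.map (S.cmp.cArr θ) (E.map prod.fst γ) :=
    fun h => E.map_mono _ (E.map_mono _ h)
  exact S.le_of_le_imp ((weaken hα).trans hθ) (weaken hβ)

lemma le_imp_iff_conj_le {A : C} {γ α β : P A} : γ ≤ S.imp α β ↔ S.conj γ α ≤ β := by
  refine ⟨fun h => S.le_of_le_imp ((S.conj_le_left γ α).trans h) (S.conj_le_right γ α),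
    fun h => le_trans ?_ (S.imp_mono_right α h)⟩
  rw [S.le_imp_iff, S.map_conj, S.cmp.map_cArr]
  exact S.le_conj le_rfl le_top

lemma le_disj_left {A : C} (α β : P A) : α ≤ S.disj α β := by
  rw [disj, S.Pi_adj]
  exact (S.le_imp_comm le_rfl).trans (S.imp_mono_right _ (S.le_imp _ _))

lemma le_disj_right {A : C} (α β : P A) : β ≤ S.disj α β := by
  rw [disj, S.Pi_adj]
  exact (S.le_imp_comm le_rfl).trans (S.le_imp _ _)

lemma disj_le {A : C} {α β γ : P A} (hα : α ≤ γ) (hβ : β ≤ γ) :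
    S.disj α β ≤ γ := by
  obtain ⟨g, hg⟩ := S.exists_map_lift_generic_eq γ
  have h := S.Pi_le_map_lift (S.imp (S.imp (E.map prod.fst α) (S.generic A))
    (S.imp (S.imp (E.map prod.fst β) (S.generic A)) (S.generic A))) g
  simp only [S.map_imp, hg, E.map_lift_map_fst] at h
  rwa [S.imp_eq_top_of_le hα, S.imp_eq_top_of_le hβ, S.top_imp, S.top_imp] at h

lemma falsum_le {A : C} (α : P A) : S.falsum A ≤ α := by
  obtain ⟨g, hg⟩ := S.exists_map_lift_generic_eq α
  have h := S.Pi_le_map_lift (S.generic A) g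
  rwa [hg] at h

lemma map_exist {Γ Δ A : C} (f : Δ ⟶ Γ) (ψ : P (Γ ⨯ A)) :
    E.map f (S.exist Γ A ψ) = S.exist Δ A (E.map (prod.map f (𝟙 A)) ψ) := by
  have hψ : E.map (prod.map (prod.map f (𝟙 S.Omega)) (𝟙 A))
        (E.map (prod.map prod.fst (𝟙 A)) ψ)
      = E.map (prod.map prod.fst (𝟙 A)) (E.map (prod.map f (𝟙 A)) ψ) := by
    rw [← E.map_comp, ← E.map_comp]
    congr 1
    apply prod.hom_ext <;> simp
  rw [exist, S.Pi_bc, S.map_imp, S.map_generic, S.Pi_bc, S.map_imp, hψ,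
    E.map_prod_map_map_fst, S.map_generic, exist]

lemma le_map_fst_exist {Γ A : C} (ψ : P (Γ ⨯ A)) :
    ψ ≤ E.map prod.fst (S.exist Γ A ψ) := by
  rw [S.map_exist, exist, S.Pi_adj]
  apply S.le_imp_comm
  refine (S.Pi_le_map_lift _ (prod.fst ≫ prod.snd)).trans (le_of_eq ?_)
  have e : (prod.lift (𝟙 ((Γ ⨯ A) ⨯ S.Omega)) (prod.fst ≫ prod.snd)
        ≫ prod.map prod.fst (𝟙 A)) ≫ prod.map prod.fst (𝟙 A)
      = (prod.fst : (Γ ⨯ A) ⨯ S.Omega ⟶ Γ ⨯ A) := by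
    apply prod.hom_ext <;> simp
  rw [S.map_imp, ← E.map_comp, ← E.map_comp, e, E.map_lift_map_fst]

lemma exist_le_iff {Γ A : C} (ψ : P (Γ ⨯ A)) (β : P Γ) :
    S.exist Γ A ψ ≤ β ↔ ψ ≤ E.map prod.fst β := by
  refine ⟨fun h => (S.le_map_fst_exist ψ).trans (E.map_mono _ h), fun h => ?_⟩
  obtain ⟨g, hg⟩ := S.exists_map_lift_generic_eq β
  have hi := S.Pi_le_map_lift (S.imp
    (S.Pi (Γ ⨯ S.Omega) A (S.imp (E.map (prod.map prod.fst (𝟙 A)) ψ)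
      (E.map prod.fst (S.generic Γ))))
    (S.generic Γ)) g
  have e1 : prod.map (prod.lift (𝟙 Γ) g) (𝟙 A) ≫ prod.map prod.fst (𝟙 A)
      = 𝟙 (Γ ⨯ A) := by
    apply prod.hom_ext <;> simp
  have e2 : prod.map (prod.lift (𝟙 Γ) g) (𝟙 A)
        ≫ (prod.fst : (Γ ⨯ S.Omega) ⨯ A ⟶ Γ ⨯ S.Omega)
      = prod.fst ≫ prod.lift (𝟙 Γ) g := by
    apply prod.hom_ext <;> simp
  rw [S.map_imp, hg, S.Pi_bc, S.map_imp, ← E.map_comp, ← E.map_comp,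
    e1, E.map_id, e2, E.map_comp, hg, S.imp_eq_top_of_le h] at hi
  rwa [S.Pi_top, S.top_imp] at hi

lemma leibniz_le_of_top_le_map_diag {X : C} {α : P (X ⨯ X)}
    (h : (⊤ : P X) ≤ E.map (prod.lift (𝟙 X) (𝟙 X)) α) : S.leibniz X ≤ α := by
  obtain ⟨χ, hχ⟩ := S.ho.classify X X α
  have hi := S.Pi_le_map_lift
    (S.imp (E.map (prod.lift (prod.fst ≫ prod.snd) prod.snd) (S.ho.mem X))
      (E.map (prod.lift (prod.fst ≫ prod.fst) prod.snd) (S.ho.mem X)))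
    (prod.snd ≫ χ)
  have e1 : prod.lift (𝟙 (X ⨯ X)) (prod.snd ≫ χ)
        ≫ prod.lift (prod.fst ≫ prod.snd) prod.snd
      = ((prod.snd : X ⨯ X ⟶ X) ≫ prod.lift (𝟙 X) (𝟙 X)) ≫ prod.map (𝟙 X) χ := by
    apply prod.hom_ext <;> simp
  have e2 : prod.lift (𝟙 (X ⨯ X)) (prod.snd ≫ χ)
        ≫ prod.lift (prod.fst ≫ prod.fst) prod.snd
      = prod.map (𝟙 X) χ := by
    apply prod.hom_ext <;> simp
  have hdiag : E.map ((prod.snd : X ⨯ X ⟶ X) ≫ prod.lift (𝟙 X) (𝟙 X)) α = ⊤ := by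
    rw [E.map_comp]
    exact top_le_iff.mp ((S.map_top prod.snd).symm.trans_le (E.map_mono _ h))
  rwa [S.map_imp, ← E.map_comp, ← E.map_comp, e1, e2, E.map_comp, hχ, hdiag,
    S.top_imp] at hi

lemma top_le_map_diag_leibniz (X : C) :
    (⊤ : P X) ≤ E.map (prod.lift (𝟙 X) (𝟙 X)) (S.leibniz X) := by
  have e : prod.map (prod.lift (𝟙 X) (𝟙 X)) (𝟙 (S.ho.pow X))
        ≫ prod.lift (prod.fst ≫ prod.fst) prod.snd
      = prod.map (prod.lift (𝟙 X) (𝟙 X)) (𝟙 (S.ho.pow X))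
        ≫ prod.lift (prod.fst ≫ prod.snd) prod.snd := by
    apply prod.hom_ext <;> simp
  rw [leibniz, S.Pi_bc, S.map_imp, ← E.map_comp, ← E.map_comp, e, S.imp_self, S.Pi_top]

lemma top_le_map_diag_iff_leibniz_le {X : C} (α : P (X ⨯ X)) :
    (⊤ : P X) ≤ E.map (prod.lift (𝟙 X) (𝟙 X)) α ↔ S.leibniz X ≤ α :=
  ⟨S.leibniz_le_of_top_le_map_diag,
    fun h => (S.top_le_map_diag_leibniz X).trans (E.map_mono _ h)⟩

noncomputable def toTripos : Tripos E where
  inf := S.conj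
  sup := S.disj
  himp := S.imp
  top _ := ⊤
  bot := S.falsum
  inf_le_left := S.conj_le_left
  inf_le_right := S.conj_le_right
  le_inf _ _ _ := S.le_conj
  le_sup_left := S.le_disj_left
  le_sup_right := S.le_disj_right
  sup_le _ _ _ := S.disj_le
  le_top _ := le_top
  bot_le := S.falsum_le
  himp_adj _ _ _ := S.le_imp_iff_conj_le
  map_inf := S.map_conj
  map_sup := S.map_disj
  map_himp := S.map_imp
  map_top := S.map_top
  map_bot := S.map_falsum
  Sig := S.exist
  Sig_adj := S.exist_le_iff
  Sig_bc := S.map_exist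
  Pi := S.Pi
  Pi_adj := S.Pi_adj
  Pi_bc := S.Pi_bc
  eq := S.leibniz
  eq_spec := S.top_le_map_diag_iff_leibniz_le
  pow := S.ho.pow
  mem := S.ho.mem
  classify := S.ho.classify

end HigherOrderPiDoctrine

section Opposite

variable [∀ A, PartialOrder (P A)] {D : Doctrine C P}

def HigherOrder.op [HasFiniteProducts C] (ho : HigherOrder D) : HigherOrder D.op where
  pow := ho.pow
  mem A := OrderDual.toDual (ho.mem A)
  classify A Y φ := ho.classify A Y (OrderDual.ofDual φ)

variable [∀ A, OrderBot (P A)]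

def CoComprehension.op (co : CoComprehension D) : Comprehension D.op where
  cObj α := co.oObj (OrderDual.ofDual α)
  cArr α := co.oArr (OrderDual.ofDual α)
  map_cArr α := co.map_oArr (OrderDual.ofDual α)
  univ α := co.univ (OrderDual.ofDual α)

lemma CoComprehension.IsFull.op {co : CoComprehension D} (hfull : co.IsFull) :
    co.op.IsFull :=
  fun A α β g hg => hfull A (OrderDual.ofDual β) (OrderDual.ofDual α) g hg

end Opposite

/-- If `(C,P)` is a higher-order `Σ`-doctrine with full
co-comprehension which is also a restricted `Σ(C_P^o)`-doctrine, then the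
opposite doctrine `(C,P^o)` is a tripos with full comprehension. -/
theorem statement12 {C : Type u} [Category.{v} C] [HasFiniteProducts C]
    {P : C → Type w} [∀ A, PartialOrder (P A)] [∀ A, OrderBot (P A)]
    (D : Doctrine C P)
    -- Σ-doctrine: left adjoints along projections with Beck–Chevalley
    (Sig : ∀ (Γ A : C), P (Γ ⨯ A) → P Γ)
    (Sig_adj : ∀ {Γ A : C} (ψ : P (Γ ⨯ A)) (β : P Γ),
      Sig Γ A ψ ≤ β ↔ ψ ≤ D.map prod.fst β)
    (Sig_bc : ∀ {Γ Δ A : C} (f : Δ ⟶ Γ) (ψ : P (Γ ⨯ A)),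
      D.map f (Sig Γ A ψ) = Sig Δ A (D.map (prod.map f (𝟙 A)) ψ))
    -- higher order
    (hho : HigherOrder D)
    -- full co-comprehension
    (co : CoComprehension D) (hfull : co.IsFull)
    -- restricted Σ(C_P^o)-structure
    (SigCo : ∀ {A : C} (α : P A), P (co.oObj α) → P A)
    (SigCo_adj : ∀ {A : C} (α : P A) (γ : P (co.oObj α)) (β : P A),
      SigCo α γ ≤ β ↔ γ ≤ D.map (co.oArr α) β)
    (SigCo_bc : ∀ {X A : C} (f : X ⟶ A) (α : P A)
      (q : co.oObj (D.map f α) ⟶ co.oObj α),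
      q ≫ co.oArr α = co.oArr (D.map f α) ≫ f →
      ∀ ξ : P A,
        D.map f (SigCo α (D.map (co.oArr α) ξ))
          = SigCo (D.map f α) (D.map q (D.map (co.oArr α) ξ))) :
    ∃ cmp : Comprehension D.op, cmp.IsFull ∧ Nonempty (Tripos D.op) := by
  let S : HigherOrderPiDoctrine D.op :=
    { cmp := co.op
      full := hfull.op
      PiC := fun α γ => OrderDual.toDual (SigCo (OrderDual.ofDual α) (OrderDual.ofDual γ))
      PiC_adj := fun α γ β =>
        SigCo_adj (OrderDual.ofDual α) (OrderDual.ofDual γ) (OrderDual.ofDual β)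
      PiC_bc := fun f α q hq ξ => SigCo_bc f (OrderDual.ofDual α) q hq (OrderDual.ofDual ξ)
      Pi := fun Γ A ψ => OrderDual.toDual (Sig Γ A (OrderDual.ofDual ψ))
      Pi_adj := fun ψ β => Sig_adj (OrderDual.ofDual ψ) (OrderDual.ofDual β)
      Pi_bc := fun f ψ => Sig_bc f (OrderDual.ofDual ψ)
      ho := hho.op }
  exact ⟨co.op, hfull.op, ⟨S.toTripos⟩⟩
end

section
/- In every eaco with a stable initial object 0, the poset P(0) is a singleton. -/
open CategoryTheory CategoryTheory.Limits

universe w v u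

variable {C : Type u} [Category.{v} C] {P : C → Type w}

/- Write `0` for the stable initial object. Any `f : Y ⟶ 0` makes `Y` a retract of `Y × 0 ≅ 0`,
so `Y` is initial and `f` is an isomorphism. In particular every co-comprehension arrow
`⌈ξ⌉ : {ξ}ᵒ ⟶ 0` is invertible, and fullness then gives `ξ ≤ η` for all `ξ η ∈ P(0)`. -/

theorem StableInitial.isIso_to [HasFiniteProducts C] {Z : C} (hZ : StableInitial Z) {Y : C}
    (f : Y ⟶ Z) : IsIso f := by
  obtain ⟨⟨hZ⟩, hstable⟩ := hZ
  obtain ⟨i⟩ := hstable Y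
  have hYZ : IsInitial (Y ⨯ Z) := hZ.ofIso i.symm
  let graphIso : Y ≅ Y ⨯ Z := ⟨prod.lift (𝟙 Y) f, prod.fst, prod.lift_fst _ _, hYZ.hom_ext _ _⟩
  have hY : IsInitial Y := hYZ.ofIso graphIso.symm
  exact ⟨hZ.to Y, hY.hom_ext _ _, hZ.hom_ext _ _⟩

theorem CoComprehension.IsFull.le_of_isIso_oArr [∀ A, PartialOrder (P A)]
    [∀ A, OrderBot (P A)] {D : Doctrine C P} {co : CoComprehension D} (hfull : co.IsFull)
    {A : C} {α : P A} [IsIso (co.oArr α)] (β : P A) : α ≤ β :=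
  hfull A α β (co.oArr β ≫ inv (co.oArr α)) (by simp)

/-- In every eaco with a stable initial object `0`, the poset
`P(0)` is a singleton. -/
theorem statement13 {C : Type u} [Category.{v} C] [HasFiniteProducts C]
    {P : C → Type w} [∀ A, SemilatticeInf (P A)] [∀ A, OrderBot (P A)]
    (D : Doctrine C P) (E : Eaco D)
    (Z : C) (hZ : StableInitial Z) : Subsingleton (P Z) := by
  have hle : ∀ ξ η : P Z, ξ ≤ η := fun ξ η =>
    have := hZ.isIso_to (E.cocmp.oArr ξ)
    E.full.le_of_isIso_oArr η
  exact ⟨fun ξ η => le_antisymm (hle ξ η) (hle η ξ)⟩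
end
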